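/- arXiv:1504.05472 — 2 statements merged into one kernel-verified Lean document; each statement's English description precedes it below -/
import Mathlib

section
/- For any real numbers η > -1, p ∈ [-1,1] with p ≠ 0, and τ > 0, the function q₃(τ) = cos(τ)·sin(τηp) + p·sin(τ)·cos(τηp) and its derivative ∂q₃/∂τ(τ) = −(1+ηp²)·sin(τ)·sin(τηp) + p(η+1)·cos(τ)·cos(τηp) cannot both vanish; i.e., q₃ has no multiple zeros in τ. -/
open Real
noncomputable def q0 (η p τ : ℝ) : ℝ := Real.cos τ * Real.cos (τ*η*p) - p * Real.sin τ * Real.sin (τ*η*p)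
noncomputable def q3 (η p τ : ℝ) : ℝ := Real.cos τ * Real.sin (τ*η*p) + p * Real.sin τ * Real.cos (τ*η*p)

/-!
Read `q₃ = 0` and `∂q₃/∂τ = 0` as a homogeneous linear system in `(sin (τηp), cos (τηp))`.
This vector is nonzero, so the determinant `p ((η + 1) cos² τ + (1 + η p²) sin² τ)` vanishes;
but both weights are positive (`1 + η p² = (1 - p²) + p² (1 + η)`), so it does not.
-/

theorem det_eq_zero_of_linear_system_of_sq_add_sq_eq_one {R : Type*} [CommRing R]
    {a b c d x y : R} (h₁ : a * x + b * y = 0) (h₂ : c * x + d * y = 0)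
    (hxy : x ^ 2 + y ^ 2 = 1) : a * d - b * c = 0 := by
  linear_combination x * (d * h₁ - b * h₂) + y * (a * h₂ - c * h₁) - (a * d - b * c) * hxy

theorem one_add_mul_sq_pos {η p : ℝ} (hη : -1 < η) (hp : p ∈ Set.Icc (-1 : ℝ) 1) (hp0 : p ≠ 0) :
    0 < 1 + η * p ^ 2 := by
  have hp2 : 0 < p ^ 2 := by positivity
  have hp2le : p ^ 2 ≤ 1 := by rw [sq_le_one_iff_abs_le_one, abs_le]; exact hp
  nlinarith

theorem mul_sq_add_mul_sq_pos {a b x y : ℝ} (ha : 0 < a) (hb : 0 < b) (hxy : x ^ 2 + y ^ 2 = 1) :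
    0 < a * x ^ 2 + b * y ^ 2 := by
  nlinarith [sq_nonneg x, sq_nonneg y, min_le_left a b, min_le_right a b, lt_min ha hb]

theorem stmt1_general (η p τ : ℝ) (hη : η > -1) (hp : p ∈ Set.Icc (-1:ℝ) 1) (hp0 : p ≠ 0) :
    ¬ (q3 η p τ = 0 ∧
       -(1 + η*p^2) * Real.sin τ * Real.sin (τ*η*p) + p*(η+1) * Real.cos τ * Real.cos (τ*η*p) = 0) := by
  rintro ⟨hq, hdq⟩
  have hdet := det_eq_zero_of_linear_system_of_sq_add_sq_eq_one hq hdq (sin_sq_add_cos_sq _)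
  have hweights : 0 < (η + 1) * cos τ ^ 2 + (1 + η * p ^ 2) * sin τ ^ 2 :=
    mul_sq_add_mul_sq_pos (by linarith) (one_add_mul_sq_pos hη hp hp0) (cos_sq_add_sin_sq τ)
  have hfactor : p * ((η + 1) * cos τ ^ 2 + (1 + η * p ^ 2) * sin τ ^ 2) = 0 := by
    linear_combination hdet
  exact hp0 ((mul_eq_zero.mp hfactor).resolve_right hweights.ne')

theorem stmt1 (η p τ : ℝ) (hη : η > -1) (hp : p ∈ Set.Icc (-1:ℝ) 1) (hp0 : p ≠ 0) (hτ : τ > 0) :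
    ¬ (q3 η p τ = 0 ∧
       -(1 + η*p^2) * Real.sin τ * Real.sin (τ*η*p) + p*(η+1) * Real.cos τ * Real.cos (τ*η*p) = 0) :=
  stmt1_general η p τ hη hp hp0
end

section
/- If -1 < η < -1/2 and |p| < 1/(2|η|), p ∈ [-1,1], then the function q₀(τ) = cos(τ)cos(τηp) − p·sin(τ)sin(τηp) has a zero in (0, π); i.e., its smallest positive zero satisfies τ₀(p) < π. -/
open Real
/-! `q0 η p` starts at `1` and ends at `q0 η p π = -cos (π η p)`, which is negative as soon as
`|η p| < 1/2`; the intermediate value theorem then gives a zero in `(0, π)`. -/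

open Set

lemma continuous_q0 (η p : ℝ) : Continuous (q0 η p) := by
  unfold q0
  fun_prop

@[simp]
lemma q0_zero (η p : ℝ) : q0 η p 0 = 1 := by
  simp [q0]

lemma q0_pi (η p : ℝ) : q0 η p π = -cos (π * η * p) := by
  simp [q0]

lemma q0_pi_neg {η p : ℝ} (h : |η * p| < 1 / 2) : q0 η p π < 0 := by
  obtain ⟨hlo, hhi⟩ := abs_lt.mp h
  have hcos : 0 < cos (π * η * p) := by
    rw [mul_assoc]
    apply cos_pos_of_mem_Ioo
    constructor <;> nlinarith [pi_pos]
  rw [q0_pi]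
  linarith

lemma exists_q0_eq_zero {η p : ℝ} (h : |η * p| < 1 / 2) :
    ∃ τ ∈ Ioo 0 π, q0 η p τ = 0 :=
  intermediate_value_Ioo' pi_pos.le (continuous_q0 η p).continuousOn
    ⟨q0_pi_neg h, by rw [q0_zero]; exact one_pos⟩

-- At `η = 0` the bound reads `|p| < 1 / 0 = 0`, which is impossible.
lemma abs_mul_lt_half_of_abs_lt {η p : ℝ} (hp : |p| < 1 / (2 * |η|)) : |η * p| < 1 / 2 := by
  rcases eq_or_ne η 0 with rfl | hη
  · simp at hp
    linarith [abs_nonneg p]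
  · have hη' : 0 < 2 * |η| := by positivity
    rw [lt_div_iff₀ hη'] at hp
    rw [abs_mul]
    linarith

theorem stmt5_general (η p : ℝ)
    (hp : |p| < 1/(2*|η|)) :
    ∃ τ ∈ Set.Ioo (0:ℝ) Real.pi, q0 η p τ = 0 :=
  exists_q0_eq_zero (abs_mul_lt_half_of_abs_lt hp)

theorem stmt5 (η p : ℝ) (hη : -1 < η) (hη2 : η < -1/2)
    (hp : |p| < 1/(2*|η|)) (hp2 : p ∈ Set.Icc (-1:ℝ) 1) :
    ∃ τ ∈ Set.Ioo (0:ℝ) Real.pi, q0 η p τ = 0 :=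
  stmt5_general η p hp
end
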